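/- For a linear additive model f(x) = Σ_{i∈N} w_i u_i(x_i) with positive weights summing to 1 and each u_i attaining both 0 and 1, and for any instance x and any nonempty set S ⊆ N of features, the Contextual Utility equals the weighted average of the constituent feature utilities: CU_S(x) = (Σ_{k∈S} w_k u_k(x_k))/(Σ_{k∈S} w_k). In particular, for a singleton S = {i}, CU_{{i}}(x) = u_i(x_i). -/

import Mathlib

set_option linter.unusedSectionVars false

open Finset

variable {N : Type*} [Fintype N] [DecidableEq N]
variable {X : N → Type*} [∀ i, Fintype (X i)] [∀ i, DecidableEq (X i)] [∀ i, Nonempty (X i)]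

/-- The instances that agree with `x` on every feature outside `S`. -/
def varies (x : ∀ i, X i) (S : Finset N) : Finset (∀ i, X i) :=
  Finset.univ.filter (fun y => ∀ j ∉ S, y j = x j)

theorem varies_nonempty (x : ∀ i, X i) (S : Finset N) : (varies x S).Nonempty :=
  ⟨x, by simp [varies]⟩

/-- `ymin_S(x)`: the minimum of `f` over all instances agreeing with `x` outside `S`. -/
noncomputable def ymin (f : (∀ i, X i) → ℝ) (x : ∀ i, X i) (S : Finset N) : ℝ :=
  (varies x S).inf' (varies_nonempty x S) f

/-- `ymax_S(x)`: the maximum of `f` over all instances agreeing with `x` outside `S`. -/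
noncomputable def ymax (f : (∀ i, X i) → ℝ) (x : ∀ i, X i) (S : Finset N) : ℝ :=
  (varies x S).sup' (varies_nonempty x S) f

/-- Contextual Importance `ω_{S,I}(x)`. -/
noncomputable def CI (f : (∀ i, X i) → ℝ) (x : ∀ i, X i) (S I : Finset N) : ℝ :=
  (ymax f x S - ymin f x S) / (ymax f x I - ymin f x I)

/-- Contextual Utility `CU_S(x)`. -/
noncomputable def CU (f : (∀ i, X i) → ℝ) (x : ∀ i, X i) (S : Finset N) : ℝ :=
  (f x - ymin f x S) / (ymax f x S - ymin f x S)

/-- Contextual influence `φ_{S,I}(x) = ω_{S,I}(x)·(CU_S(x) − φ₀)`. -/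
noncomputable def Cinfl (f : (∀ i, X i) → ℝ) (x : ∀ i, X i) (S I : Finset N) (φ₀ : ℝ) : ℝ :=
  CI f x S I * (CU f x S - φ₀)

/-! Among the instances agreeing with `x` outside `S`, an additively separable model
`f y = ∑ i, g i (y i)` lets each feature `j ∈ S` vary independently, so `ymin` and `ymax` are
attained by minimising, resp. maximising, every `g j` separately; the contribution of the fixed
features cancels in `CU`. For the linear model the extreme values of `w j * u j` are `0` and
`w j`. -/

section Separable

variable {f : (∀ i, X i) → ℝ} {g : ∀ i, X i → ℝ} {x : ∀ i, X i} {S : Finset N}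

theorem mem_varies {y : ∀ i, X i} : y ∈ varies x S ↔ ∀ j ∉ S, y j = x j := by
  simp [varies]

theorem piecewise_mem_varies (t : ∀ i, X i) : S.piecewise t x ∈ varies x S :=
  mem_varies.2 fun _ hj => S.piecewise_eq_of_notMem t x hj

theorem apply_eq_of_mem_varies (hf : ∀ y, f y = ∑ i, g i (y i)) {y : ∀ i, X i}
    (hy : y ∈ varies x S) : f y = ∑ j ∈ Sᶜ, g j (x j) + ∑ j ∈ S, g j (y j) := by
  rw [hf, ← sum_compl_add_sum S]
  congr 1
  exact sum_congr rfl fun j hj => by rw [mem_varies.1 hy j (mem_compl.1 hj)]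

theorem apply_piecewise_eq (hf : ∀ y, f y = ∑ i, g i (y i)) (t : ∀ i, X i) :
    f (S.piecewise t x) = ∑ j ∈ Sᶜ, g j (x j) + ∑ j ∈ S, g j (t j) := by
  rw [apply_eq_of_mem_varies hf (piecewise_mem_varies t)]
  exact congrArg _ (sum_congr rfl fun j hj => by rw [S.piecewise_eq_of_mem t x hj])

theorem ymin_eq_of_isLeast (hf : ∀ y, f y = ∑ i, g i (y i)) {m : N → ℝ}
    (hm : ∀ j ∈ S, IsLeast (Set.range (g j)) (m j)) :
    ymin f x S = ∑ j ∈ Sᶜ, g j (x j) + ∑ j ∈ S, m j := by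
  choose! t ht using fun j hj => (hm j hj).1
  apply le_antisymm
  · calc ymin f x S ≤ f (S.piecewise t x) := inf'_le f (piecewise_mem_varies t)
      _ = _ := by rw [apply_piecewise_eq hf, sum_congr rfl ht]
  · refine le_inf' _ _ fun y hy => ?_
    rw [apply_eq_of_mem_varies hf hy]
    gcongr with j hj
    exact (hm j hj).2 ⟨y j, rfl⟩

theorem ymax_eq_of_isGreatest (hf : ∀ y, f y = ∑ i, g i (y i)) {M : N → ℝ}
    (hM : ∀ j ∈ S, IsGreatest (Set.range (g j)) (M j)) :
    ymax f x S = ∑ j ∈ Sᶜ, g j (x j) + ∑ j ∈ S, M j := by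
  choose! t ht using fun j hj => (hM j hj).1
  apply le_antisymm
  · refine sup'_le _ _ fun y hy => ?_
    rw [apply_eq_of_mem_varies hf hy]
    gcongr with j hj
    exact (hM j hj).2 ⟨y j, rfl⟩
  · calc _ = f (S.piecewise t x) := by rw [apply_piecewise_eq hf, sum_congr rfl ht]
      _ ≤ ymax f x S := le_sup' f (piecewise_mem_varies t)

theorem CU_eq_of_isLeast_of_isGreatest (hf : ∀ y, f y = ∑ i, g i (y i)) {m M : N → ℝ}
    (hm : ∀ j ∈ S, IsLeast (Set.range (g j)) (m j))
    (hM : ∀ j ∈ S, IsGreatest (Set.range (g j)) (M j)) :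
    CU f x S = (∑ j ∈ S, (g j (x j) - m j)) / ∑ j ∈ S, (M j - m j) := by
  rw [CU, ymin_eq_of_isLeast hf hm, ymax_eq_of_isGreatest hf hM,
    apply_eq_of_mem_varies hf (mem_varies.2 fun _ _ => rfl), sum_sub_distrib, sum_sub_distrib]
  ring_nf

end Separable

theorem isLeast_range_const_mul {α R : Type*} [MonoidWithZero R] [Preorder R] [PosMulMono R]
    {w a : R} (hw : 0 ≤ w) {v : α → R}
    (hv : IsLeast (Set.range v) a) : IsLeast (Set.range fun t => w * v t) (w * a) := by
  simpa only [Set.range_comp'] using (monotone_mul_left_of_nonneg hw).map_isLeast hv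

theorem isGreatest_range_const_mul {α R : Type*} [MonoidWithZero R] [Preorder R] [PosMulMono R]
    {w a : R} (hw : 0 ≤ w) {v : α → R}
    (hv : IsGreatest (Set.range v) a) : IsGreatest (Set.range fun t => w * v t) (w * a) := by
  simpa only [Set.range_comp'] using (monotone_mul_left_of_nonneg hw).map_isGreatest hv

theorem CU_eq_weighted_average_general
    (w : N → ℝ) (u : ∀ i, X i → ℝ) (f : (∀ i, X i) → ℝ)
    (hw : ∀ i, 0 < w i)
    (hu01 : ∀ i t, u i t ∈ Set.Icc (0 : ℝ) 1)
    (hu0 : ∀ i, ∃ t, u i t = 0) (hu1 : ∀ i, ∃ t, u i t = 1)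
    (hf : ∀ y, f y = ∑ i, w i * u i (y i))
    (x : ∀ i, X i) :
    (∀ S : Finset N, S.Nonempty →
      CU f x S = (∑ k ∈ S, w k * u k (x k)) / (∑ k ∈ S, w k)) ∧
    (∀ i : N, CU f x {i} = u i (x i)) := by
  have hmin i : IsLeast (Set.range fun t => w i * u i t) 0 := by
    simpa only [mul_zero] using isLeast_range_const_mul (hw i).le
      ⟨hu0 i, Set.forall_mem_range.2 fun t => (hu01 i t).1⟩
  have hmax i : IsGreatest (Set.range fun t => w i * u i t) (w i) := by
    simpa only [mul_one] using isGreatest_range_const_mul (hw i).le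
      ⟨hu1 i, Set.forall_mem_range.2 fun t => (hu01 i t).2⟩
  have hCU (S : Finset N) : CU f x S = (∑ k ∈ S, w k * u k (x k)) / (∑ k ∈ S, w k) := by
    simpa only [sub_zero] using CU_eq_of_isLeast_of_isGreatest hf (fun j _ => hmin j) (fun j _ => hmax j)
  refine ⟨fun S _ => hCU S, fun i => ?_⟩
  rw [hCU, sum_singleton, sum_singleton, mul_div_cancel_left₀ _ (hw i).ne']

/-- For a linear additive model, the Contextual Utility is the weighted average of the
constituent feature utilities; in particular for a singleton it is that feature's utility. -/
theorem CU_eq_weighted_average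
    (w : N → ℝ) (u : ∀ i, X i → ℝ) (f : (∀ i, X i) → ℝ)
    (hw : ∀ i, 0 < w i) (hwsum : ∑ i, w i = 1)
    (hu01 : ∀ i t, u i t ∈ Set.Icc (0 : ℝ) 1)
    (hu0 : ∀ i, ∃ t, u i t = 0) (hu1 : ∀ i, ∃ t, u i t = 1)
    (hf : ∀ y, f y = ∑ i, w i * u i (y i))
    (x : ∀ i, X i) :
    (∀ S : Finset N, S.Nonempty →
      CU f x S = (∑ k ∈ S, w k * u k (x k)) / (∑ k ∈ S, w k)) ∧
    (∀ i : N, CU f x {i} = u i (x i)) :=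
  CU_eq_weighted_average_general w u f hw hu01 hu0 hu1 hf x
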